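/- Fix δ_L > 0 and 0 < δ_R < 1. For every τ_L ≥ δ_L + 1 there exists a unique τ_R < -δ_R - 1 such that ψ̂(τ_L, δ_L, τ_R, δ_R) = 0. Writing this value as H(τ_L), the function H : [δ_L + 1, ∞) → (-∞, -δ_R - 1) is strictly increasing, H(τ_L) → -δ_R - 1 as τ_L → +∞, and H(δ_L + 1) = β + δ_R/β where β is the smallest real root of the cubic p(β) = (1 + δ_L)·β³ + (1 - δ_L - δ_R)·β² - (1 + δ_L)·β + δ_L. -/

import Mathlib

/-! Write `u = λ_R^u`. On `u < -1` the substitution `τ_R = u + δ_R / u` is an increasing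
bijection onto `τ_R < -δ_R - 1`, and it turns `ψ̂` into the cubic
`f_{τ_L}(u) = τ_L u (u² - 1) + (1 - δ_R - δ_L) u² + δ_L`, with `f_{δ_L+1} = p`.
For `τ_L ≥ δ_L + 1` this cubic is strictly increasing on `u ≤ -1`, negative at `-2` and equal
to `1 - δ_R > 0` at `-1`, so it has exactly one root `u(τ_L) < -1`. Since `u (u² - 1) < 0`,
`f_{τ_L}(u)` decreases in `τ_L` and tends to `-∞`; hence `u(τ_L)` increases to `-1`, and
`H = u + δ_R / u` inherits monotonicity and the limit `-1 - δ_R`. Finally minimality gives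
`β ≤ u(δ_L + 1) < -1`, so uniqueness of the root on `u ≤ -1` forces `β = u(δ_L + 1)`. -/

noncomputable section

/-- The unstable eigenvalue `λ_R^u` of `A_R`. -/
def lamRu (ξ : ℝ × ℝ × ℝ × ℝ) : ℝ := (ξ.2.2.1 - Real.sqrt (ξ.2.2.1 ^ 2 - 4 * ξ.2.2.2)) / 2

/-- The stable eigenvalue `λ_R^s` of `A_R`. -/
def lamRs (ξ : ℝ × ℝ × ℝ × ℝ) : ℝ := (ξ.2.2.1 + Real.sqrt (ξ.2.2.1 ^ 2 - 4 * ξ.2.2.2)) / 2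

/-- The function `ψ̂(ξ) = -δ_L((λ_R^u)² - 1) + λ_R^u((λ_R^u)² - 1)τ_L + (1 - δ_R)(λ_R^u)²`. -/
def psiHat (ξ : ℝ × ℝ × ℝ × ℝ) : ℝ :=
  -ξ.2.1 * ((lamRu ξ) ^ 2 - 1) + lamRu ξ * ((lamRu ξ) ^ 2 - 1) * ξ.1
    + (1 - ξ.2.2.2) * (lamRu ξ) ^ 2

section Substitution

variable {dR : ℝ}

lemma add_div_lt_neg_sub_one (hdR : dR ≤ 1) {u : ℝ} (hu : u < -1) : u + dR / u < -dR - 1 := by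
  have hu0 : u < 0 := by linarith
  have : u ≠ 0 := hu0.ne
  have key : u + dR / u - (-dR - 1) = (u + 1) * (u + dR) / u := by
    field_simp
    ring
  have : (u + 1) * (u + dR) / u < 0 :=
    div_neg_of_pos_of_neg (mul_pos_of_neg_of_neg (by linarith) (by linarith)) hu0
  linarith

lemma strictMonoOn_add_div (hdR : dR ≤ 1) : StrictMonoOn (fun u => u + dR / u) (Set.Iio (-1)) := by
  intro a (ha : a < -1) b (hb : b < -1) hab
  have : a ≠ 0 := by linarith
  have : b ≠ 0 := by linarith
  have hab0 : 0 < a * b := mul_pos_of_neg_of_neg (by linarith) (by linarith)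
  have key : (b + dR / b) - (a + dR / a) = (b - a) * (a * b - dR) / (a * b) := by
    field_simp
    ring
  have : 0 < (b - a) * (a * b - dR) / (a * b) :=
    div_pos (mul_pos (by linarith) (by nlinarith)) hab0
  simp only
  linarith

lemma lamRu_add_div (hdR : dR ≤ 1) {u : ℝ} (hu : u < -1) (tL dL : ℝ) :
    lamRu (tL, dL, u + dR / u, dR) = u := by
  have hu0 : u ≠ 0 := by linarith
  have hdisc : (u + dR / u) ^ 2 - 4 * dR = ((dR - u ^ 2) / u) ^ 2 := by
    field_simp
    ring
  have hroot : 0 ≤ (dR - u ^ 2) / u := (div_pos_of_neg_of_neg (by nlinarith) (by linarith)).le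
  simp only [lamRu]
  rw [hdisc, Real.sqrt_sq hroot]
  field_simp
  ring

lemma sq_one_sub_lt_discrim (hdR : 0 ≤ dR) {tR : ℝ} (htR : tR < -dR - 1) :
    (1 - dR) ^ 2 < tR ^ 2 - 4 * dR := by
  nlinarith [mul_pos (show 0 < -dR - 1 - tR by linarith) (show 0 < dR + 1 - tR by linarith)]

lemma lamRu_lt_neg_one (hdR : 0 ≤ dR) {tR : ℝ} (htR : tR < -dR - 1) (tL dL : ℝ) :
    lamRu (tL, dL, tR, dR) < -1 := by
  have hdisc := sq_one_sub_lt_discrim hdR htR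
  have : |1 - dR| < Real.sqrt (tR ^ 2 - 4 * dR) := by
    apply abs_lt_of_sq_lt_sq _ (Real.sqrt_nonneg _)
    rw [Real.sq_sqrt (by nlinarith [sq_nonneg (1 - dR)])]
    exact hdisc
  simp only [lamRu]
  linarith [le_abs_self (1 - dR)]

/-- Vieta: `λ_R^u λ_R^s = δ_R` and `λ_R^u + λ_R^s = τ_R`. -/
lemma eq_lamRu_add_div (hdR : 0 ≤ dR) {tR : ℝ} (htR : tR < -dR - 1) (tL dL : ℝ) :
    tR = lamRu (tL, dL, tR, dR) + dR / lamRu (tL, dL, tR, dR) := by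
  have hu := lamRu_lt_neg_one hdR htR tL dL
  have hsq := Real.sq_sqrt (by nlinarith [sq_one_sub_lt_discrim hdR htR] : 0 ≤ tR ^ 2 - 4 * dR)
  have hdiv : dR / lamRu (tL, dL, tR, dR) = (tR + Real.sqrt (tR ^ 2 - 4 * dR)) / 2 := by
    rw [div_eq_iff (by linarith)]
    simp only [lamRu]
    linear_combination (1 / 4 : ℝ) * hsq
  rw [hdiv]
  simp only [lamRu]
  ring

end Substitution

def psiCubic (dL dR tL u : ℝ) : ℝ := tL * u * (u ^ 2 - 1) + (1 - dR - dL) * u ^ 2 + dL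

lemma psiHat_eq_psiCubic (tL dL tR dR : ℝ) :
    psiHat (tL, dL, tR, dR) = psiCubic dL dR tL (lamRu (tL, dL, tR, dR)) := by
  simp only [psiHat, psiCubic]
  ring

lemma psiCubic_self_add_one (dL dR u : ℝ) :
    psiCubic dL dR (dL + 1) u = (1 + dL) * u ^ 3 + (1 - dL - dR) * u ^ 2 - (1 + dL) * u + dL := by
  unfold psiCubic
  ring

section Cubic

variable {dL dR tL : ℝ}

lemma strictMonoOn_psiCubic (hdL : 0 ≤ dL) (hdR : 0 ≤ dR) (htL : dL + 1 ≤ tL) :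
    StrictMonoOn (psiCubic dL dR tL) (Set.Iic (-1)) := by
  intro a (ha : a ≤ -1) b (hb : b ≤ -1) hab
  have hexp : psiCubic dL dR tL b - psiCubic dL dR tL a
      = (b - a) * (tL * (a ^ 2 + a * b + b ^ 2 - 1) + (1 - dR - dL) * (a + b)) := by
    unfold psiCubic
    ring
  have hQ : 0 ≤ a ^ 2 + a * b + b ^ 2 - 1 := by nlinarith
  have hkey : 0 < tL * (a ^ 2 + a * b + b ^ 2 - 1) + (1 - dR - dL) * (a + b) := by
    nlinarith [mul_pos (show 0 < -a - 1 by linarith) (show 0 < -b by linarith),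
      mul_nonneg (show 0 ≤ dR + dL by linarith) (show 0 ≤ -(a + b) by linarith),
      mul_nonneg (show 0 ≤ tL - 1 by linarith) hQ]
  nlinarith [mul_pos (sub_pos.2 hab) hkey]

lemma exists_psiCubic_root (hdL : 0 ≤ dL) (hdR : 0 ≤ dR) (hdR1 : dR < 1) (htL : dL + 1 ≤ tL) :
    ∃ u < -1, psiCubic dL dR tL u = 0 := by
  have hcont : ContinuousOn (psiCubic dL dR tL) (Set.Icc (-2) (-1)) := by
    unfold psiCubic
    fun_prop
  have hzero : (0 : ℝ) ∈ Set.Ioo (psiCubic dL dR tL (-2)) (psiCubic dL dR tL (-1)) := by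
    constructor <;> · unfold psiCubic; linarith
  obtain ⟨u, hu, hfu⟩ := intermediate_value_Ioo (by norm_num) hcont hzero
  exact ⟨u, hu.2, hfu⟩

lemma psiCubic_lt_of_lt {u : ℝ} (hu : u < -1) {tL' : ℝ} (htt : tL < tL') :
    psiCubic dL dR tL' u < psiCubic dL dR tL u := by
  have : u * (u ^ 2 - 1) < 0 := mul_neg_of_neg_of_pos (by linarith) (by nlinarith)
  unfold psiCubic
  nlinarith [mul_pos (sub_pos.2 htt) (neg_pos.2 this)]

lemma root_lt_root_of_lt (hdL : 0 ≤ dL) (hdR : 0 ≤ dR) (htL : dL + 1 ≤ tL) {tL' u u' : ℝ}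
    (htt : tL < tL') (hu : u < -1) (hu' : u' ≤ -1)
    (hf : psiCubic dL dR tL u = 0) (hf' : psiCubic dL dR tL' u' = 0) : u < u' := by
  have hmono := strictMonoOn_psiCubic hdL hdR (htL.trans htt.le)
  refine (hmono.lt_iff_lt hu.le hu').1 ?_
  linarith [psiCubic_lt_of_lt (dL := dL) (dR := dR) hu htt]

lemma tendsto_psiCubic_atBot {u : ℝ} (hu : u < -1) :
    Filter.Tendsto (fun tL => psiCubic dL dR tL u) Filter.atTop Filter.atBot := by
  have hc : u * (u ^ 2 - 1) < 0 := mul_neg_of_neg_of_pos (by linarith) (by nlinarith)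
  refine (Filter.tendsto_atBot_add_const_right _ ((1 - dR - dL) * u ^ 2 + dL)
    (Filter.tendsto_id.atTop_mul_const_of_neg hc)).congr fun tL => ?_
  simp only [psiCubic, id]
  ring

lemma tendsto_root_psiCubic (hdL : 0 ≤ dL) (hdR : 0 ≤ dR) {L : ℝ → ℝ}
    (hL : ∀ᶠ tL in Filter.atTop, L tL < -1 ∧ psiCubic dL dR tL (L tL) = 0) :
    Filter.Tendsto L Filter.atTop (nhds (-1)) := by
  refine tendsto_order.2 ⟨fun μ hμ => ?_, fun μ hμ => hL.mono fun tL h => h.1.trans hμ⟩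
  filter_upwards [hL, Filter.eventually_ge_atTop (dL + 1),
    (tendsto_psiCubic_atBot hμ).eventually_lt_atBot 0] with tL ⟨hlt, hroot⟩ htL hneg
  exact (strictMonoOn_psiCubic hdL hdR htL).lt_iff_lt hμ.le hlt.le |>.1 (hroot ▸ hneg)

end Cubic

/-- Proposition 5.4: for `δ_L > 0` and `0 < δ_R < 1` there is a function `H` on
`[δ_L+1, ∞)` giving the unique `τ_R < -δ_R - 1` with `ψ̂ = 0`; `H` is strictly increasing,
tends to `-δ_R - 1` as `τ_L → ∞`, and `H(δ_L+1) = β + δ_R/β` where `β` is the smallest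
real root of `p(β) = (1+δ_L)β³ + (1-δ_L-δ_R)β² - (1+δ_L)β + δ_L`. -/
theorem curve_H (dL dR : ℝ) (h0 : 0 < dL) (h1 : 0 < dR) (h2 : dR < 1)
    (β : ℝ)
    (hβroot : (1 + dL) * β ^ 3 + (1 - dL - dR) * β ^ 2 - (1 + dL) * β + dL = 0)
    (hβmin : ∀ b : ℝ, (1 + dL) * b ^ 3 + (1 - dL - dR) * b ^ 2 - (1 + dL) * b + dL = 0 →
      β ≤ b) :
    ∃ H : ℝ → ℝ,
      (∀ tL : ℝ, dL + 1 ≤ tL →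
        H tL < -dR - 1 ∧ psiHat (tL, dL, H tL, dR) = 0 ∧
          ∀ tR : ℝ, tR < -dR - 1 → psiHat (tL, dL, tR, dR) = 0 → tR = H tL) ∧
      (∀ tL tL' : ℝ, dL + 1 ≤ tL → tL < tL' → H tL < H tL') ∧
      Filter.Tendsto H Filter.atTop (nhds (-dR - 1)) ∧
      H (dL + 1) = β + dR / β := by
  choose! L hL_lt hL_root using fun tL (htL : dL + 1 ≤ tL) =>
    exists_psiCubic_root h0.le h1.le h2 htL
  have hinj := fun tL (htL : dL + 1 ≤ tL) => (strictMonoOn_psiCubic h0.le h1.le htL).injOn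
  refine ⟨fun tL => L tL + dR / L tL, fun tL htL => ⟨add_div_lt_neg_sub_one h2.le (hL_lt tL htL),
    ?_, fun tR htR hψ => ?_⟩, fun tL tL' htL htt => ?_, ?_, ?_⟩
  · rw [psiHat_eq_psiCubic, lamRu_add_div h2.le (hL_lt tL htL)]
    exact hL_root tL htL
  · rw [psiHat_eq_psiCubic] at hψ
    rw [eq_lamRu_add_div h1.le htR tL dL, hinj tL htL (lamRu_lt_neg_one h1.le htR tL dL).le
      (hL_lt tL htL).le (hψ.trans (hL_root tL htL).symm)]
  · have htL' := htL.trans htt.le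
    exact strictMonoOn_add_div h2.le (hL_lt tL htL) (hL_lt tL' htL') <|
      root_lt_root_of_lt h0.le h1.le htL htt (hL_lt tL htL) (hL_lt tL' htL').le
        (hL_root tL htL) (hL_root tL' htL')
  · have hL := tendsto_root_psiCubic h0.le h1.le <|
      (Filter.eventually_ge_atTop (dL + 1)).mono fun tL htL => ⟨hL_lt tL htL, hL_root tL htL⟩
    have hlim : -1 + dR / -1 = -dR - 1 := by ring
    exact hlim ▸ hL.add (tendsto_const_nhds.div hL (by norm_num))
  · have hu := hL_lt (dL + 1) le_rfl
    have hβ : β = L (dL + 1) := hinj (dL + 1) le_rfl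
      ((hβmin _ (by rw [← psiCubic_self_add_one]; exact hL_root _ le_rfl)).trans hu.le) hu.le
      (by rw [psiCubic_self_add_one, hβroot, hL_root _ le_rfl])
    rw [hβ]

end
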